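/- In the root system of type D_n, for a non-simple positive root γ, the number of unordered pairs {α, β} of positive roots with α + β = γ equals |Supp_{≥1}(γ)| - 1 + |Supp_{≥2}(γ)|, where Supp_{≥k}(γ) = { i : n_i ≥ k } for γ = Σ_i n_i α_i. -/

import Mathlib

open Finset

/-- Standard basis vector `ε_i` (1-indexed) in the ambient space `ℕ → ℤ`. -/
noncomputable def epsD (i : ℕ) : ℕ → ℤ := Pi.single i 1

/-- Simple roots of type `D_n` (1-indexed). -/
noncomputable def alphaD (n i : ℕ) : ℕ → ℤ :=
  if i = n then epsD (n - 1) + epsD n else epsD i - epsD (i + 1)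

/-- Positive roots of type `D_n`: `ε_i ± ε_j` for `1 ≤ i < j ≤ n`. -/
def IsPosRootD (n : ℕ) (v : ℕ → ℤ) : Prop :=
  ∃ i j : ℕ, 1 ≤ i ∧ i < j ∧ j ≤ n ∧ (v = epsD i - epsD j ∨ v = epsD i + epsD j)

/-!
Writing `γ = εₐ ∓ ε_b`, the decompositions `γ = α + β` can be listed explicitly, and there are
`ht γ - 1` of them, where `ht γ = Σ cᵢ` is the height. Every coefficient of a positive root of
`D_n` is at most `2`, so `Σ cᵢ = |Supp_{≥1} γ| + |Supp_{≥2} γ|`. Both facts about coefficients are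
read off from linear functionals on `ℕ → ℤ`: the height is `v ↦ Σₜ (n - t) vₜ`, and the partial
sum `Σ_{s ≤ t} v_s` is at most `2` on a positive root but at least `cₜ` on `Σ cᵢ αᵢ`, being
nonnegative on every simple root and at least `1` on `αₜ`.
-/

lemma epsD_apply (i t : ℕ) : epsD i t = if t = i then 1 else 0 := by
  simp [epsD, Pi.single_apply]

lemma epsD_sub_epsD_eq_iff {i j p q : ℕ} (hij : i ≠ j) :
    epsD i - epsD j = epsD p - epsD q ↔ i = p ∧ j = q := by
  refine ⟨fun h => ?_, by rintro ⟨rfl, rfl⟩; rfl⟩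
  have hi := congrFun h i
  have hj := congrFun h j
  simp only [Pi.sub_apply, epsD_apply] at hi hj
  split_ifs at hi hj <;> omega

lemma ne_of_epsD_add_epsD_eq {i j p q : ℕ} (hij : i ≠ j)
    (h : epsD i + epsD j = epsD p + epsD q) : p ≠ q := by
  rintro rfl
  have := congrFun h p
  simp only [Pi.add_apply, epsD_apply] at this
  split_ifs at this <;> omega

lemma epsD_sub_ne_epsD_add {i j p q : ℕ} (hij : i ≠ j) :
    epsD i - epsD j ≠ epsD p + epsD q := by
  intro h
  have := congrFun h j
  simp only [Pi.sub_apply, Pi.add_apply, epsD_apply] at this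
  split_ifs at this <;> omega

lemma isPosRootD_epsD_sub_epsD {n i j : ℕ} (hi : 1 ≤ i) (hij : i < j) (hjn : j ≤ n) :
    IsPosRootD n (epsD i - epsD j) :=
  ⟨i, j, hi, hij, hjn, Or.inl rfl⟩

lemma isPosRootD_epsD_add_epsD {n i j : ℕ} (hi : 1 ≤ i) (hj : 1 ≤ j) (hin : i ≤ n) (hjn : j ≤ n)
    (hij : i ≠ j) : IsPosRootD n (epsD i + epsD j) := by
  rcases hij.lt_or_gt with h | h
  · exact ⟨i, j, hi, h, hjn, Or.inr rfl⟩
  · exact ⟨j, i, hj, h, hin, Or.inr (add_comm _ _)⟩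

lemma IsPosRootD.two_le {n : ℕ} {γ : ℕ → ℤ} (hγ : IsPosRootD n γ) : 2 ≤ n := by
  obtain ⟨i, j, hi, hij, hjn, -⟩ := hγ
  omega

def partialSum (t : ℕ) : (ℕ → ℤ) →ₗ[ℤ] ℤ := ∑ s ∈ Icc 1 t, LinearMap.proj s

lemma partialSum_apply (t : ℕ) (v : ℕ → ℤ) : partialSum t v = ∑ s ∈ Icc 1 t, v s := by
  simp [partialSum]

lemma partialSum_epsD {i : ℕ} (hi : 1 ≤ i) (t : ℕ) :
    partialSum t (epsD i) = if i ≤ t then 1 else 0 := by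
  simp [partialSum_apply, epsD_apply, hi]

lemma partialSum_epsD_sub_epsD {n i j : ℕ} (hi : 1 ≤ i) (hij : i < j) (hjn : j ≤ n) :
    partialSum n (epsD i - epsD j) = 0 := by
  rw [map_sub, partialSum_epsD hi, partialSum_epsD (by omega), if_pos (by omega), if_pos hjn,
    sub_self]

lemma partialSum_epsD_add_epsD {n i j : ℕ} (hi : 1 ≤ i) (hij : i < j) (hjn : j ≤ n) :
    partialSum n (epsD i + epsD j) = 2 := by
  rw [map_add, partialSum_epsD hi, partialSum_epsD (by omega), if_pos (by omega), if_pos hjn]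
  norm_num

lemma partialSum_le_two {n : ℕ} {γ : ℕ → ℤ} (hγ : IsPosRootD n γ) (t : ℕ) :
    partialSum t γ ≤ 2 := by
  obtain ⟨i, j, hi, hij, -, rfl | rfl⟩ := hγ <;>
  · simp only [map_sub, map_add, partialSum_epsD hi, partialSum_epsD (show 1 ≤ j by omega)]
    split_ifs <;> omega

lemma partialSum_alphaD_nonneg {n i : ℕ} (hn : 2 ≤ n) (hi : 1 ≤ i) (t : ℕ) :
    0 ≤ partialSum t (alphaD n i) := by
  unfold alphaD
  split_ifs
  · rw [map_add, partialSum_epsD (by omega), partialSum_epsD (by omega)]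
    split_ifs <;> omega
  · rw [map_sub, partialSum_epsD hi, partialSum_epsD (by omega)]
    split_ifs <;> omega

lemma one_le_partialSum_alphaD_self {n t : ℕ} (hn : 2 ≤ n) (ht : 1 ≤ t) :
    1 ≤ partialSum t (alphaD n t) := by
  unfold alphaD
  split_ifs
  · rw [map_add, partialSum_epsD (by omega), partialSum_epsD (by omega)]
    split_ifs <;> omega
  · rw [map_sub, partialSum_epsD ht, partialSum_epsD (by omega)]
    split_ifs <;> omega

lemma coeff_le_partialSum {n t : ℕ} (hn : 2 ≤ n) (ht : 1 ≤ t) (htn : t ≤ n) (c : ℕ → ℕ) :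
    (c t : ℤ) ≤ partialSum t (∑ i ∈ Icc 1 n, (c i : ℤ) • alphaD n i) := by
  simp only [map_sum, map_zsmul, smul_eq_mul]
  calc (c t : ℤ) ≤ c t * partialSum t (alphaD n t) :=
        le_mul_of_one_le_right (by positivity) (one_le_partialSum_alphaD_self hn ht)
    _ ≤ ∑ i ∈ Icc 1 n, (c i : ℤ) * partialSum t (alphaD n i) :=
        single_le_sum (f := fun i => (c i : ℤ) * partialSum t (alphaD n i))
          (fun i hi => mul_nonneg (by positivity) (partialSum_alphaD_nonneg hn (mem_Icc.1 hi).1 t))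
          (mem_Icc.2 ⟨ht, htn⟩)

lemma coeff_le_two {n : ℕ} {γ : ℕ → ℤ} (hγ : IsPosRootD n γ) {c : ℕ → ℕ}
    (hc : γ = ∑ i ∈ Icc 1 n, (c i : ℤ) • alphaD n i) {t : ℕ} (ht : t ∈ Icc 1 n) : c t ≤ 2 := by
  have hle := coeff_le_partialSum hγ.two_le (mem_Icc.1 ht).1 (mem_Icc.1 ht).2 c
  rw [← hc] at hle
  have := partialSum_le_two hγ t
  omega

-- `εₜ = αₜ + ⋯ + α_{n-2} + (α_{n-1} + αₙ) / 2` has height `n - t`.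
def heightD (n : ℕ) : (ℕ → ℤ) →ₗ[ℤ] ℤ := ∑ s ∈ Icc 1 n, ((n : ℤ) - s) • LinearMap.proj s

lemma heightD_epsD {n i : ℕ} (hi : 1 ≤ i) (hin : i ≤ n) : heightD n (epsD i) = n - i := by
  simp [heightD, epsD_apply, hi, hin]

lemma heightD_alphaD {n i : ℕ} (hn : 2 ≤ n) (hi : 1 ≤ i) (hin : i ≤ n) :
    heightD n (alphaD n i) = 1 := by
  unfold alphaD
  split_ifs with h
  · subst h
    rw [map_add, heightD_epsD (by omega) (by omega), heightD_epsD hi le_rfl]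
    omega
  · rw [map_sub, heightD_epsD hi hin, heightD_epsD (by omega) (by omega)]
    omega

lemma heightD_sum_smul_alphaD {n : ℕ} (hn : 2 ≤ n) (c : ℕ → ℕ) :
    heightD n (∑ i ∈ Icc 1 n, (c i : ℤ) • alphaD n i) = ((∑ i ∈ Icc 1 n, c i : ℕ) : ℤ) := by
  rw [map_sum]
  push_cast
  refine sum_congr rfl fun i hi => ?_
  rw [map_zsmul, heightD_alphaD hn (mem_Icc.1 hi).1 (mem_Icc.1 hi).2, smul_eq_mul, mul_one]

lemma card_filter_one_le_add_card_filter_two_le {ι : Type*} {s : Finset ι} {c : ι → ℕ}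
    (hc : ∀ i ∈ s, c i ≤ 2) :
    #(s.filter (fun i => 1 ≤ c i)) + #(s.filter (fun i => 2 ≤ c i)) = ∑ i ∈ s, c i := by
  rw [card_filter, card_filter, ← sum_add_distrib]
  refine sum_congr rfl fun i hi => ?_
  have := hc i hi
  split_ifs <;> omega

def rootPairs (n : ℕ) (γ : ℕ → ℤ) : Set (Sym2 (ℕ → ℤ)) :=
  {p | ∃ α β : ℕ → ℤ, p = s(α, β) ∧ IsPosRootD n α ∧ IsPosRootD n β ∧ α + β = γ}

lemma indices_of_sub_add_sub_eq_sub {a b i j p q : ℕ} (hab : a ≠ b) (hij : i < j) (hpq : p < q)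
    (h : (epsD i - epsD j) + (epsD p - epsD q) = epsD a - epsD b) :
    (i = a ∧ j = p ∧ q = b) ∨ (p = a ∧ q = i ∧ j = b) := by
  have ha := congrFun h a
  simp only [Pi.add_apply, Pi.sub_apply, epsD_apply] at ha
  by_cases hia : i = a
  · subst hia
    have : epsD p - epsD q = epsD j - epsD b := by linear_combination (norm := module) h
    rw [epsD_sub_epsD_eq_iff hpq.ne] at this
    omega
  · have hpa : p = a := by split_ifs at ha <;> omega
    subst hpa
    have : epsD i - epsD j = epsD q - epsD b := by linear_combination (norm := module) h
    rw [epsD_sub_epsD_eq_iff hij.ne] at this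
    omega

lemma indices_of_sub_add_add_eq_add {a b i j p q : ℕ} (hij : i < j) (hpq : p < q)
    (h : (epsD i - epsD j) + (epsD p + epsD q) = epsD a + epsD b) :
    (i = a ∧ j ≠ b ∧ epsD p + epsD q = epsD j + epsD b) ∨
      (i = b ∧ j ≠ a ∧ epsD p + epsD q = epsD j + epsD a) := by
  have hi := congrFun h i
  simp only [Pi.add_apply, Pi.sub_apply, epsD_apply] at hi
  by_cases hia : i = a
  · subst hia
    have hβ : epsD p + epsD q = epsD j + epsD b := by linear_combination (norm := module) h
    exact Or.inl ⟨rfl, ne_of_epsD_add_epsD_eq hpq.ne hβ, hβ⟩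
  · have hib : i = b := by split_ifs at hi <;> omega
    subst hib
    have hβ : epsD p + epsD q = epsD j + epsD a := by linear_combination (norm := module) h
    exact Or.inr ⟨rfl, ne_of_epsD_add_epsD_eq hpq.ne hβ, hβ⟩

lemma rootPairs_epsD_sub_epsD {n a b : ℕ} (ha : 1 ≤ a) (hab : a < b) (hbn : b ≤ n) :
    rootPairs n (epsD a - epsD b) =
      (fun k => s(epsD a - epsD k, epsD k - epsD b)) '' Set.Ioo a b := by
  ext p
  constructor
  · rintro ⟨α, β, rfl, ⟨i, j, hi, hij, hjn, rfl | rfl⟩, ⟨p, q, hp, hpq, hqn, rfl | rfl⟩, h⟩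
    · rcases indices_of_sub_add_sub_eq_sub hab.ne hij hpq h with ⟨rfl, rfl, rfl⟩ | ⟨rfl, rfl, rfl⟩
      · exact ⟨j, ⟨hij, hpq⟩, rfl⟩
      · exact ⟨_, ⟨hpq, hij⟩, Sym2.eq_swap⟩
    -- `partialSum n` is `0` on the roots `εᵢ - εⱼ` and `2` on the roots `εᵢ + εⱼ`.
    all_goals
      have hsum := congrArg (partialSum n) h
      rw [map_add] at hsum
      simp only [partialSum_epsD_sub_epsD, partialSum_epsD_add_epsD, hi, hij, hjn, hp, hpq, hqn,
        ha, hab, hbn] at hsum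
      norm_num at hsum
  · rintro ⟨k, ⟨hak, hkb⟩, rfl⟩
    exact ⟨_, _, rfl, isPosRootD_epsD_sub_epsD ha hak (by omega),
      isPosRootD_epsD_sub_epsD (by omega) hkb hbn, by abel⟩

lemma rootPairs_epsD_add_epsD {n a b : ℕ} (ha : 1 ≤ a) (hab : a < b) (hbn : b ≤ n) :
    rootPairs n (epsD a + epsD b) =
      (fun k => s(epsD a - epsD k, epsD k + epsD b)) '' (Set.Ioc a n \ {b}) ∪
        (fun k => s(epsD b - epsD k, epsD k + epsD a)) '' Set.Ioc b n := by
  ext p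
  constructor
  · rintro ⟨α, β, rfl, ⟨i, j, hi, hij, hjn, rfl | rfl⟩, ⟨p, q, hp, hpq, hqn, rfl | rfl⟩, h⟩
    rotate_left
    · rcases indices_of_sub_add_add_eq_add hij hpq h with ⟨rfl, hjb, hβ⟩ | ⟨rfl, -, hβ⟩
      · exact Or.inl ⟨j, ⟨⟨hij, hjn⟩, hjb⟩, by rw [hβ]⟩
      · exact Or.inr ⟨j, ⟨hij, hjn⟩, by rw [hβ]⟩
    · rw [add_comm] at h
      rcases indices_of_sub_add_add_eq_add hpq hij h with ⟨rfl, hqb, hα⟩ | ⟨rfl, -, hα⟩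
      · exact Or.inl ⟨q, ⟨⟨hpq, hqn⟩, hqb⟩, by rw [hα, Sym2.eq_swap]⟩
      · exact Or.inr ⟨q, ⟨hpq, hqn⟩, by rw [hα, Sym2.eq_swap]⟩
    all_goals
      have hsum := congrArg (partialSum n) h
      rw [map_add] at hsum
      simp only [partialSum_epsD_sub_epsD, partialSum_epsD_add_epsD, hi, hij, hjn, hp, hpq, hqn,
        ha, hab, hbn] at hsum
      norm_num at hsum
  · rintro (⟨k, ⟨⟨hak, hkn⟩, hkb⟩, rfl⟩ | ⟨k, ⟨hbk, hkn⟩, rfl⟩)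
    · exact ⟨_, _, rfl, isPosRootD_epsD_sub_epsD ha hak hkn,
        isPosRootD_epsD_add_epsD (by omega) (by omega) hkn hbn hkb, by abel⟩
    · exact ⟨_, _, rfl, isPosRootD_epsD_sub_epsD (by omega) hbk hkn,
        isPosRootD_epsD_add_epsD (by omega) ha hkn (by omega) (by omega), by abel⟩

lemma ncard_rootPairs_epsD_sub_epsD {n a b : ℕ} (ha : 1 ≤ a) (hab : a < b) (hbn : b ≤ n) :
    (rootPairs n (epsD a - epsD b)).ncard = b - a - 1 := by
  rw [rootPairs_epsD_sub_epsD ha hab hbn, Set.InjOn.ncard_image, Set.ncard_Ioo_nat]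
  intro k hk k' hk' heq
  rcases Sym2.eq_iff.1 heq with ⟨h, -⟩ | ⟨h, -⟩
  · exact ((epsD_sub_epsD_eq_iff hk.1.ne).1 h).2
  · exact absurd ((epsD_sub_epsD_eq_iff hk.1.ne).1 h).1 hk'.1.ne

lemma injOn_sym2_epsD_sub_epsD_add {x y : ℕ} (s : Set ℕ) (hs : ∀ k ∈ s, x < k) :
    Set.InjOn (fun k => s(epsD x - epsD k, epsD k + epsD y)) s := by
  intro k hk k' _ heq
  rcases Sym2.eq_iff.1 heq with ⟨h, -⟩ | ⟨h, -⟩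
  · exact ((epsD_sub_epsD_eq_iff (hs k hk).ne).1 h).2
  · exact absurd h (epsD_sub_ne_epsD_add (hs k hk).ne)

lemma ncard_rootPairs_epsD_add_epsD {n a b : ℕ} (ha : 1 ≤ a) (hab : a < b) (hbn : b ≤ n) :
    (rootPairs n (epsD a + epsD b)).ncard = (n - a - 1) + (n - b) := by
  rw [rootPairs_epsD_add_epsD ha hab hbn, Set.ncard_union_eq,
    (injOn_sym2_epsD_sub_epsD_add _ fun k hk => hk.1.1).ncard_image,
    (injOn_sym2_epsD_sub_epsD_add _ fun k hk => hk.1).ncard_image,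
    Set.ncard_sdiff_singleton_of_mem (show b ∈ Set.Ioc a n from ⟨hab, hbn⟩),
    Set.ncard_Ioc_nat, Set.ncard_Ioc_nat]
  rw [Set.disjoint_left]
  rintro _ ⟨k, hk, rfl⟩ ⟨k', hk', heq⟩
  rcases Sym2.eq_iff.1 heq with ⟨h, -⟩ | ⟨h, -⟩
  · exact hab.ne ((epsD_sub_epsD_eq_iff hk.1.1.ne).1 h.symm).1
  · exact epsD_sub_ne_epsD_add hk'.1.ne h

lemma ncard_rootPairs_add_one {n : ℕ} {γ : ℕ → ℤ} (hγ : IsPosRootD n γ) :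
    ((rootPairs n γ).ncard : ℤ) + 1 = heightD n γ := by
  obtain ⟨a, b, ha, hab, hbn, rfl | rfl⟩ := hγ
  · rw [ncard_rootPairs_epsD_sub_epsD ha hab hbn, map_sub, heightD_epsD ha (by omega),
      heightD_epsD (by omega) hbn]
    omega
  · rw [ncard_rootPairs_epsD_add_epsD ha hab hbn, map_add, heightD_epsD ha (by omega),
      heightD_epsD (by omega) hbn]
    omega

theorem stmt5_general (n : ℕ) (γ : ℕ → ℤ) (hγ : IsPosRootD n γ)
    (c : ℕ → ℕ) (hc : γ = ∑ i ∈ Finset.Icc 1 n, (c i : ℤ) • alphaD n i) :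
    {p : Sym2 (ℕ → ℤ) | ∃ α β : ℕ → ℤ, p = s(α, β) ∧
        IsPosRootD n α ∧ IsPosRootD n β ∧ α + β = γ}.ncard
      = (((Finset.Icc 1 n).filter (fun i => 1 ≤ c i)).card - 1)
        + ((Finset.Icc 1 n).filter (fun i => 2 ≤ c i)).card := by
  set S₁ := (Icc 1 n).filter (fun i => 1 ≤ c i)
  set S₂ := (Icc 1 n).filter (fun i => 2 ≤ c i)
  have hpairs := ncard_rootPairs_add_one hγ
  have hheight : heightD n γ = ((#S₁ + #S₂ : ℕ) : ℤ) := by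
    rw [hc, heightD_sum_smul_alphaD hγ.two_le,
      card_filter_one_le_add_card_filter_two_le fun i hi => coeff_le_two hγ hc hi]
  have hsupp : #S₂ ≤ #S₁ := card_le_card (monotone_filter_right _ fun i _ (h : 2 ≤ c i) => by omega)
  change (rootPairs n γ).ncard = _
  omega

/-- for a non-simple positive root `γ = Σ n_i α_i` of type `D_n`,
the number of unordered pairs `{α, β}` of positive roots with `α + β = γ`
equals `|Supp_{≥1}(γ)| - 1 + |Supp_{≥2}(γ)|`, where `Supp_{≥k}(γ) = { i : n_i ≥ k }`. -/
theorem stmt5 (n : ℕ) (hn : 4 ≤ n) (γ : ℕ → ℤ) (hγ : IsPosRootD n γ)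
    (hns : ∀ i, γ ≠ alphaD n i)
    (c : ℕ → ℕ) (hc : γ = ∑ i ∈ Finset.Icc 1 n, (c i : ℤ) • alphaD n i) :
    {p : Sym2 (ℕ → ℤ) | ∃ α β : ℕ → ℤ, p = s(α, β) ∧
        IsPosRootD n α ∧ IsPosRootD n β ∧ α + β = γ}.ncard
      = (((Finset.Icc 1 n).filter (fun i => 1 ≤ c i)).card - 1)
        + ((Finset.Icc 1 n).filter (fun i => 2 ≤ c i)).card :=
  stmt5_general n γ hγ c hc
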